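/- arXiv:2411.05429 — 2 statements merged into one kernel-verified Lean document; each statement's English description precedes it below -/
import Mathlib

section
/- Let G be a finite group. The subgraph of the complement of the power graph of G induced on the set of non-isolated vertices is connected. -/
/-!
If `x` and `y` are not adjacent in the complement `Γ` of the power graph, one is a power of the
other, say `y ∈ ⟨x⟩`. Pick `Γ`-neighbours `z` of `x` and `w` of `y`. Unless `x – z – y`,
`x – w – y` or `x – z – w – y` is already a path, both `y` and `w` lie in `⟨x⟩ ∩ ⟨z⟩` and are
incomparable, so their orders are incomparable under divisibility and there are primes `p ≠ q`
with `p ∣ |y|` and `q ∣ |w|`. The `p′`-part and the `q′`-part of `z` generate `⟨z⟩ ⊄ ⟨x⟩`, so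
one of them, `u`, is not in `⟨x⟩`; then `x – u – y` or `x – u – w – y` is a path.
-/

/-- The enhanced power graph of a group: distinct `x`, `y` are adjacent iff they lie in a
common cyclic subgroup. -/
def enhancedPowerGraph (G : Type*) [Group G] : SimpleGraph G where
  Adj x y := x ≠ y ∧ ∃ z : G, x ∈ Subgroup.zpowers z ∧ y ∈ Subgroup.zpowers z
  symm := ⟨fun x y ⟨h, z, hx, hy⟩ => ⟨h.symm, z, hy, hx⟩⟩
  loopless := ⟨fun x h => h.1 rfl⟩

/-- The power graph of a group: distinct `x`, `y` are adjacent iff one is a power of the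
other. -/
def powerGraph (G : Type*) [Group G] : SimpleGraph G where
  Adj x y := x ≠ y ∧ (x ∈ Subgroup.zpowers y ∨ y ∈ Subgroup.zpowers x)
  symm := ⟨fun x y ⟨h, hz⟩ => ⟨h.symm, hz.symm⟩⟩
  loopless := ⟨fun x h => h.1 rfl⟩

/-- An independent set: a set of pairwise non-adjacent vertices. -/
def SimpleGraph.IsIndepSet' {V : Type*} (Γ : SimpleGraph V) (s : Set V) : Prop :=
  s.Pairwise fun x y => ¬ Γ.Adj x y

open Subgroup

namespace SimpleGraph

variable {V : Type*} {H : SimpleGraph V}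

theorem Reachable.induce_nonisolated {x y : V} (h : H.Reachable x y)
    (hx : x ∈ {v | ∃ u, H.Adj v u}) (hy : y ∈ {v | ∃ u, H.Adj v u}) :
    (H.induce {v | ∃ u, H.Adj v u}).Reachable ⟨x, hx⟩ ⟨y, hy⟩ := by
  obtain ⟨p⟩ := h
  induction p with
  | nil => rfl
  | cons hadj p ih =>
    exact (show (H.induce _).Adj ⟨_, hx⟩ ⟨_, _, hadj.symm⟩ from hadj).reachable.trans (ih _ hy)

end SimpleGraph

theorem Nat.exists_prime_ne_of_not_dvd_of_not_dvd {a b : ℕ} (ha : a ≠ 0) (hb : b ≠ 0)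
    (hab : ¬ a ∣ b) (hba : ¬ b ∣ a) :
    ∃ p q, p.Prime ∧ q.Prime ∧ p ≠ q ∧ p ∣ a ∧ q ∣ b := by
  obtain ⟨p, hp, hpab⟩ : ∃ p, p.Prime ∧ b.factorization p < a.factorization p := by
    simpa [← Nat.factorization_prime_le_iff_dvd ha hb] using hab
  obtain ⟨q, hq, hqab⟩ : ∃ q, q.Prime ∧ a.factorization q < b.factorization q := by
    simpa [← Nat.factorization_prime_le_iff_dvd hb ha] using hba
  refine ⟨p, q, hp, hq, ?_, Nat.dvd_of_factorization_pos (by omega),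
    Nat.dvd_of_factorization_pos (by omega)⟩
  rintro rfl
  omega

section

variable {G : Type*} [Group G]

theorem Subgroup.pow_gcd_mem {H : Subgroup G} {z : G} {a b : ℕ} (ha : z ^ a ∈ H)
    (hb : z ^ b ∈ H) : z ^ a.gcd b ∈ H := by
  have hz : z ^ a.gcd b = (z ^ a) ^ a.gcdA b * (z ^ b) ^ a.gcdB b := by
    rw [← zpow_natCast, Nat.gcd_eq_gcd_ab, zpow_add, zpow_mul, zpow_mul, zpow_natCast,
      zpow_natCast]
  rw [hz]
  exact H.mul_mem (H.zpow_mem ha _) (H.zpow_mem hb _)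

theorem mem_zpowers_of_orderOf_dvd {z y w : G} (hz : IsOfFinOrder z) (hy : y ∈ zpowers z)
    (hw : w ∈ zpowers z) (hwy : orderOf w ∣ orderOf y) : w ∈ zpowers y := by
  obtain ⟨i, rfl⟩ : ∃ i : ℕ, z ^ i = y := hz.mem_powers_iff_mem_zpowers.2 hy
  obtain ⟨j, rfl⟩ : ∃ j : ℕ, z ^ j = w := hz.mem_powers_iff_mem_zpowers.2 hw
  set n := orderOf z
  have hn : 0 < n := hz.orderOf_pos
  have hd : z ^ n.gcd i ∈ zpowers (z ^ i) :=
    pow_gcd_mem (by simp [n, pow_orderOf_eq_one]) (mem_zpowers _)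
  have hdj : n.gcd i ∣ j := by
    rw [orderOf_dvd_iff_pow_eq_one, hz.orderOf_pow, ← pow_mul,
      ← orderOf_dvd_iff_pow_eq_one] at hwy
    refine Nat.dvd_of_mul_dvd_mul_right (Nat.div_pos (Nat.gcd_le_left i hn)
      (Nat.gcd_pos_of_pos_left i hn)) ?_
    rwa [Nat.mul_div_cancel' (Nat.gcd_dvd_left n i)]
  obtain ⟨k, rfl⟩ := hdj
  rw [pow_mul]
  exact pow_mem hd k

theorem notMem_zpowers_pow_ordProj {z y : G} (hz : IsOfFinOrder z) {p : ℕ} (hp : p.Prime)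
    (hpy : p ∣ orderOf y) : y ∉ zpowers (z ^ ordProj[p] (orderOf z)) := by
  intro hy
  have hpz : p ∣ ordCompl[p] (orderOf z) := by
    rw [← orderOf_pow_of_dvd (pow_ne_zero _ hp.ne_zero) (Nat.ordProj_dvd _ p)]
    exact hpy.trans (orderOf_dvd_of_mem_zpowers hy)
  exact (hp.coprime_iff_not_dvd.1 (Nat.coprime_ordCompl hp hz.orderOf_pos.ne')) hpz

theorem exists_mem_zpowers_notMem_of_incomparable {z y w : G} (hz : IsOfFinOrder z)
    (hy : y ∈ zpowers z) (hw : w ∈ zpowers z) (hyw : y ∉ zpowers w) (hwy : w ∉ zpowers y)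
    {H : Subgroup G} (hzH : z ∉ H) :
    ∃ u ∈ zpowers z, u ∉ H ∧ (y ∉ zpowers u ∨ w ∉ zpowers u) := by
  obtain ⟨p, q, hp, hq, hpq, hpy, hqw⟩ := Nat.exists_prime_ne_of_not_dvd_of_not_dvd
    (hz.of_mem_zpowers hy).orderOf_pos.ne' (hz.of_mem_zpowers hw).orderOf_pos.ne'
    (fun h ↦ hyw (mem_zpowers_of_orderOf_dvd hz hw hy h))
    (fun h ↦ hwy (mem_zpowers_of_orderOf_dvd hz hy hw h))
  by_cases hp' : z ^ ordProj[p] (orderOf z) ∈ H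
  · by_cases hq' : z ^ ordProj[q] (orderOf z) ∈ H
    · refine absurd ?_ hzH
      simpa [(Nat.coprime_pow_primes _ _ hp hq hpq).gcd_eq_one] using pow_gcd_mem hp' hq'
    · exact ⟨_, pow_mem (mem_zpowers z) _, hq', Or.inr (notMem_zpowers_pow_ordProj hz hq hqw)⟩
  · exact ⟨_, pow_mem (mem_zpowers z) _, hp', Or.inl (notMem_zpowers_pow_ordProj hz hp hpy)⟩

theorem compl_powerGraph_adj_iff {x y : G} :
    (powerGraph G)ᶜ.Adj x y ↔ x ∉ zpowers y ∧ y ∉ zpowers x := by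
  rw [SimpleGraph.compl_adj, powerGraph, not_and, not_or]
  refine ⟨fun ⟨hne, h⟩ ↦ h hne, fun h ↦ ⟨?_, fun _ ↦ h⟩⟩
  rintro rfl
  exact h.1 (mem_zpowers x)

theorem compl_powerGraph_reachable_of_notMem_zpowers {x z u v : G} (hxz : x ∉ zpowers z)
    (huz : u ∈ zpowers z) (hux : u ∉ zpowers x) (hvx : v ∈ zpowers x) (hvu : v ∉ zpowers u) :
    (powerGraph G)ᶜ.Reachable x v := by
  have hxu : (powerGraph G)ᶜ.Adj x u :=
    compl_powerGraph_adj_iff.2 ⟨fun h ↦ hxz (zpowers_le.2 huz h), hux⟩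
  have huv : (powerGraph G)ᶜ.Adj u v :=
    compl_powerGraph_adj_iff.2 ⟨fun h ↦ hux (zpowers_le.2 hvx h), hvu⟩
  exact hxu.reachable.trans huv.reachable

theorem compl_powerGraph_reachable_of_mem_zpowers [Finite G] {x y : G}
    (hx : ∃ z, (powerGraph G)ᶜ.Adj x z) (hy : ∃ w, (powerGraph G)ᶜ.Adj y w)
    (hyx : y ∈ zpowers x) : (powerGraph G)ᶜ.Reachable x y := by
  obtain ⟨z, hz⟩ := hx
  obtain ⟨hxz, hzx⟩ := compl_powerGraph_adj_iff.1 hz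
  obtain ⟨w, hw⟩ := hy
  obtain ⟨hyw, hwy⟩ := compl_powerGraph_adj_iff.1 hw
  have hreach_wy := hw.symm.reachable
  rcases em' (y ∈ zpowers z) with hyz | hyz
  · exact compl_powerGraph_reachable_of_notMem_zpowers hxz (mem_zpowers z) hzx hyx hyz
  rcases em' (w ∈ zpowers x) with hwx | hwx
  · have hxw : (powerGraph G)ᶜ.Adj x w :=
      compl_powerGraph_adj_iff.2 ⟨fun h ↦ hyw (zpowers_le.2 h hyx), hwx⟩
    exact hxw.reachable.trans hreach_wy
  rcases em' (w ∈ zpowers z) with hwz | hwz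
  · exact (compl_powerGraph_reachable_of_notMem_zpowers hxz (mem_zpowers z) hzx hwx
      hwz).trans hreach_wy
  obtain ⟨u, huz, hux, hyu | hwu⟩ :=
    exists_mem_zpowers_notMem_of_incomparable (isOfFinOrder_of_finite z) hyz hwz hyw hwy hzx
  · exact compl_powerGraph_reachable_of_notMem_zpowers hxz huz hux hyx hyu
  · exact (compl_powerGraph_reachable_of_notMem_zpowers hxz huz hux hwx hwu).trans hreach_wy

end

/-- The induced subgraph of the complement of the power graph on the non-isolated
vertices is connected. -/
theorem compl_powerGraph_preconnected
    {G : Type*} [Group G] [Finite G] :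
    (((powerGraph G)ᶜ).induce
        {x : G | ∃ y, ((powerGraph G)ᶜ).Adj x y}).Preconnected := by
  rintro ⟨x, hx⟩ ⟨y, hy⟩
  refine SimpleGraph.Reachable.induce_nonisolated ?_ hx hy
  by_cases hxy : (powerGraph G)ᶜ.Adj x y
  · exact hxy.reachable
  rw [compl_powerGraph_adj_iff, not_and_or, not_not, not_not] at hxy
  rcases hxy with hxy | hyx
  · exact (compl_powerGraph_reachable_of_mem_zpowers hy hx hxy).symm
  · exact compl_powerGraph_reachable_of_mem_zpowers hx hy hyx
end

section
/- Let G be a finite group. The induced subgraph of the complement of the power graph of G on its non-isolated vertices is connected with diameter at most 3. -/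
open Subgroup

section OrderOfZPowers

variable {G : Type*} [Group G]

theorem pow_gcd_orderOf_mem_zpowers_pow (t : G) (b : ℕ) :
    t ^ (orderOf t).gcd b ∈ zpowers (t ^ b) := by
  refine ⟨(orderOf t).gcdB b, ?_⟩
  change (t ^ b) ^ (orderOf t).gcdB b = t ^ (orderOf t).gcd b
  rw [← zpow_natCast t ((orderOf t).gcd b), Nat.gcd_eq_gcd_ab, zpow_add, zpow_mul, zpow_natCast,
    pow_orderOf_eq_one, one_zpow, one_mul, zpow_mul, zpow_natCast]

theorem mem_zpowers_of_orderOf_dvd_s14 {t x z : G} (ht : IsOfFinOrder t) (hx : x ∈ zpowers t)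
    (hz : z ∈ zpowers t) (h : orderOf x ∣ orderOf z) : x ∈ zpowers z := by
  obtain ⟨a, rfl⟩ := (Submonoid.mem_powers_iff _ _).1 (ht.mem_powers_iff_mem_zpowers.2 hx)
  obtain ⟨b, rfl⟩ := (Submonoid.mem_powers_iff _ _).1 (ht.mem_powers_iff_mem_zpowers.2 hz)
  set d := (orderOf t).gcd b
  have hz_order : orderOf (t ^ b) = orderOf t / d := IsOfFinOrder.orderOf_pow t b ht
  have hd_dvd_a : d ∣ a := by
    have hN : orderOf t ∣ a * (orderOf t / d) := by
      rw [orderOf_dvd_iff_pow_eq_one, pow_mul]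
      exact orderOf_dvd_iff_pow_eq_one.1 (hz_order ▸ h)
    have hdN : d * (orderOf t / d) ∣ a * (orderOf t / d) := by
      rwa [Nat.mul_div_cancel' (Nat.gcd_dvd_left (orderOf t) b)]
    exact Nat.dvd_of_mul_dvd_mul_right (hz_order ▸ ht.pow.orderOf_pos) hdN
  rw [← Nat.mul_div_cancel' hd_dvd_a, pow_mul]
  exact pow_mem (pow_gcd_orderOf_mem_zpowers_pow t b) _

theorem mem_zpowers_or_mem_zpowers_of_orderOf_eq_prime_pow {p k : ℕ} (hp : p.Prime) {t x z : G}
    (ht : orderOf t = p ^ k) (hx : x ∈ zpowers t) (hz : z ∈ zpowers t) :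
    x ∈ zpowers z ∨ z ∈ zpowers x := by
  have ht_fin : IsOfFinOrder t := orderOf_pos_iff.1 (ht ▸ pow_pos hp.pos k)
  obtain ⟨i, -, hi⟩ := (Nat.dvd_prime_pow hp).1 (ht ▸ orderOf_dvd_of_mem_zpowers hx)
  obtain ⟨j, -, hj⟩ := (Nat.dvd_prime_pow hp).1 (ht ▸ orderOf_dvd_of_mem_zpowers hz)
  rcases le_total i j with hij | hji
  · exact .inl (mem_zpowers_of_orderOf_dvd_s14 ht_fin hx hz (hi ▸ hj ▸ pow_dvd_pow p hij))
  · exact .inr (mem_zpowers_of_orderOf_dvd_s14 ht_fin hz hx (hi ▸ hj ▸ pow_dvd_pow p hji))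

theorem IsOfFinOrder.exists_prime_pow_orderOf_mem_zpowers_notMem {w : G} (hw : IsOfFinOrder w)
    {H : Subgroup G} (hwH : w ∉ H) :
    ∃ t ∈ zpowers w, t ∉ H ∧ ∃ p k : ℕ, p.Prime ∧ orderOf t = p ^ k := by
  -- Otherwise every prime power dividing the order of `w` divides `|⟨w⟩ ⊓ H|`, so `⟨w⟩ ≤ H`.
  by_contra! hno_prime_pow
  have : Finite (zpowers w) := finite_zpowers.2 hw
  have : Finite ↥(zpowers w ⊓ H) := Finite.of_injective _ (inclusion_injective inf_le_left)
  have hdvd : orderOf w ∣ Nat.card ↥(zpowers w ⊓ H) := by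
    refine (Nat.dvd_iff_prime_pow_dvd_dvd _ _).2 fun p k hp hpk => ?_
    have ht := orderOf_pow_orderOf_div hw.orderOf_pos.ne' hpk
    have ht_mem : w ^ (orderOf w / p ^ k) ∈ zpowers w ⊓ H := by
      refine ⟨pow_mem (mem_zpowers w) _, ?_⟩
      by_contra htH
      exact hno_prime_pow _ (pow_mem (mem_zpowers w) _) htH p k hp ht
    simpa only [Nat.card_zpowers, ht] using card_dvd_of_le (zpowers_le.2 ht_mem)
  have hcard := Nat.le_of_dvd Nat.card_pos hdvd
  rw [← Nat.card_zpowers] at hcard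
  exact hwH (eq_of_le_of_card_ge inf_le_left hcard ▸ mem_zpowers w).2

end OrderOfZPowers

namespace SimpleGraph

variable {V : Type*} {Γ : SimpleGraph V}

theorem Walk.exists_adj_of_mem_support : ∀ {u v : V} (p : Γ.Walk u v), (∃ z, Γ.Adj u z) →
    ∀ x ∈ p.support, ∃ z, Γ.Adj x z
  | _, _, .nil, hu, _, hx => by rw [support_nil, List.mem_singleton] at hx; exact hx ▸ hu
  | _, _, .cons h p, _, x, hx => by
    rcases List.mem_cons.1 hx with rfl | hx
    · exact ⟨_, h⟩
    · exact p.exists_adj_of_mem_support ⟨_, h.symm⟩ x hx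

theorem Walk.length_induce {s : Set V} :
    ∀ {u v : V} (p : Γ.Walk u v) (hp : ∀ x ∈ p.support, x ∈ s), (p.induce s hp).length = p.length
  | _, _, .nil, _ => rfl
  | _, _, .cons _ p, _ => by simp [p.length_induce]

end SimpleGraph

section ComplPowerGraph

variable {G : Type*} [Group G]

theorem mem_zpowers_of_not_compl_powerGraph_adj {x y : G} (h : ¬(powerGraph G)ᶜ.Adj x y)
    (hyx : y ∉ zpowers x) : x ∈ zpowers y := by
  by_contra hxy
  exact h (compl_powerGraph_adj_iff.2 ⟨hxy, hyx⟩)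

theorem exists_compl_powerGraph_walk_length_le_three_of_mem_zpowers (hG : IsMulTorsion G)
    {x y : G} (hxy : x ∈ zpowers y) (hx : ∃ z, (powerGraph G)ᶜ.Adj x z)
    (hy : ∃ w, (powerGraph G)ᶜ.Adj y w) :
    ∃ p : (powerGraph G)ᶜ.Walk x y, p.length ≤ 3 := by
  obtain ⟨w, hwy, hyw⟩ := hy.imp fun w h => compl_powerGraph_adj_iff.1 h.symm
  obtain ⟨t, htw, hty, p, k, hp, ht⟩ := (hG w).exists_prime_pow_orderOf_mem_zpowers_notMem hwy
  have hyt : (powerGraph G)ᶜ.Adj y t :=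
    compl_powerGraph_adj_iff.2 ⟨fun h => hyw (zpowers_le.2 htw h), hty⟩
  by_cases hxt : (powerGraph G)ᶜ.Adj x t
  · exact ⟨.cons hxt (.cons hyt.symm .nil), by simp⟩
  have hxt' : x ∈ zpowers t := mem_zpowers_of_not_compl_powerGraph_adj hxt fun h =>
    hty (zpowers_le.2 hxy h)
  obtain ⟨z, hxz⟩ := hx
  by_cases hzy : (powerGraph G)ᶜ.Adj z y
  · exact ⟨.cons hxz (.cons hzy .nil), by simp⟩
  by_cases hzt : (powerGraph G)ᶜ.Adj z t
  · exact ⟨.cons hxz (.cons hzt (.cons hyt.symm .nil)), by simp⟩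
  -- Otherwise `x` and `z` both lie in the cyclic `p`-group `⟨t⟩`, so they are comparable.
  obtain ⟨hxz', hzx'⟩ := compl_powerGraph_adj_iff.1 hxz
  have hzy' : z ∈ zpowers y := mem_zpowers_of_not_compl_powerGraph_adj hzy fun h =>
    hxz' (zpowers_le.2 h hxy)
  have hzt' : z ∈ zpowers t := mem_zpowers_of_not_compl_powerGraph_adj hzt fun h =>
    hty (zpowers_le.2 hzy' h)
  exact ((mem_zpowers_or_mem_zpowers_of_orderOf_eq_prime_pow hp ht hxt' hzt').elim
    hxz' hzx').elim

theorem exists_compl_powerGraph_walk_length_le_three (hG : IsMulTorsion G) {x y : G}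
    (hx : ∃ z, (powerGraph G)ᶜ.Adj x z) (hy : ∃ z, (powerGraph G)ᶜ.Adj y z) :
    ∃ p : (powerGraph G)ᶜ.Walk x y, p.length ≤ 3 := by
  by_cases hxy : x ∈ zpowers y
  · exact exists_compl_powerGraph_walk_length_le_three_of_mem_zpowers hG hxy hx hy
  by_cases hyx : y ∈ zpowers x
  · obtain ⟨p, hp⟩ := exists_compl_powerGraph_walk_length_le_three_of_mem_zpowers hG hyx hy hx
    exact ⟨p.reverse, by rwa [SimpleGraph.Walk.length_reverse]⟩
  · exact ⟨(compl_powerGraph_adj_iff.2 ⟨hxy, hyx⟩).toWalk, by simp⟩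

end ComplPowerGraph

/-- The induced subgraph of the complement of the power graph on the non-isolated
vertices is connected with diameter at most 3. -/
theorem compl_powerGraph_preconnected_diam_le_three
    {G : Type*} [Group G] [Finite G] :
    (((powerGraph G)ᶜ).induce
        {x : G | ∃ y, ((powerGraph G)ᶜ).Adj x y}).Preconnected ∧
      ∀ a b : {x : G | ∃ y, ((powerGraph G)ᶜ).Adj x y},
        (((powerGraph G)ᶜ).induce
            {x : G | ∃ y, ((powerGraph G)ᶜ).Adj x y}).dist a b ≤ 3 := by
  have walk (a b : {x : G | ∃ y, ((powerGraph G)ᶜ).Adj x y}) :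
      ∃ q : (((powerGraph G)ᶜ).induce {x | ∃ y, ((powerGraph G)ᶜ).Adj x y}).Walk a b,
        q.length ≤ 3 := by
    obtain ⟨p, hp⟩ := exists_compl_powerGraph_walk_length_le_three isMulTorsion_of_finite a.2 b.2
    exact ⟨_, (p.length_induce (p.exists_adj_of_mem_support a.2)).trans_le hp⟩
  exact ⟨fun a b => (walk a b).elim fun q _ => q.reachable,
    fun a b => (walk a b).elim fun q hq => (SimpleGraph.dist_le q).trans hq⟩
end
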